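/- For a real-valued logic L the following are equivalent: (i) L satisfies both P1 and P2; (ii) L is classical logic, i.e. L = Taut({0,1},*); (iii) the two-element algebra {0,1} is the unique algebra of truth values inducing L, i.e. for every continuous t-norm *' and every algebra of truth values T' for *' with Taut(T',*') = L one has T' = {0,1}. -/

import Mathlib

open Set

noncomputable section

/-- The real unit interval `[0,1]` as a subset of `ℝ`. -/
def I01 : Set ℝ := Set.Icc 0 1

/-- A continuous t-norm on `[0,1]`. -/
structure ContTNorm where
  mul : ℝ → ℝ → ℝ
  maps_to : ∀ x ∈ I01, ∀ y ∈ I01, mul x y ∈ I01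
  continuousOn : ContinuousOn (fun p : ℝ × ℝ => mul p.1 p.2) (I01 ×ˢ I01)
  assoc : ∀ x ∈ I01, ∀ y ∈ I01, ∀ z ∈ I01, mul (mul x y) z = mul x (mul y z)
  comm : ∀ x ∈ I01, ∀ y ∈ I01, mul x y = mul y x
  mono : ∀ a ∈ I01, ∀ b ∈ I01, ∀ c ∈ I01, b ≤ c → mul a b ≤ mul a c
  one_mul' : ∀ x ∈ I01, mul 1 x = x

/-- The residuum of a t-norm: `x →* y := sup { c ∈ [0,1] | x * c ≤ y }`. -/
def resid (t : ContTNorm) (x y : ℝ) : ℝ :=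
  sSup {c | c ∈ I01 ∧ t.mul x c ≤ y}

/-- An algebra of truth values for the t-norm `t`: a subset of `[0,1]` containing
`0` and `1` and closed under `t.mul` and its residuum. -/
structure TruthAlg (t : ContTNorm) where
  carrier : Set ℝ
  subset : carrier ⊆ I01
  zero_mem : (0:ℝ) ∈ carrier
  one_mem : (1:ℝ) ∈ carrier
  mul_mem : ∀ x ∈ carrier, ∀ y ∈ carrier, t.mul x y ∈ carrier
  resid_mem : ∀ x ∈ carrier, ∀ y ∈ carrier, resid t x y ∈ carrier

/-- Propositional formulas over countably many variables with `&`, `→`, `⊥`. -/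
inductive Formula : Type
  | var : ℕ → Formula
  | bot : Formula
  | conj : Formula → Formula → Formula
  | impl : Formula → Formula → Formula

/-- `α ↔ β := (α → β) & (β → α)`. -/
def Formula.iff (a b : Formula) : Formula := .conj (.impl a b) (.impl b a)

/-- The valuation determined by an assignment `v` of reals to the variables. -/
def eval (t : ContTNorm) (v : ℕ → ℝ) : Formula → ℝ
  | .var i => v i
  | .bot => 0
  | .conj a b => t.mul (eval t v a) (eval t v b)
  | .impl a b => resid t (eval t v a) (eval t v b)

/-- A valuation into `(T, t)` is (identified with) an assignment of values of `T`
to the propositional variables. -/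
def IsValuation (t : ContTNorm) (T : TruthAlg t) (v : ℕ → ℝ) : Prop :=
  ∀ i, v i ∈ T.carrier

/-- The logic induced by `(T, t)`: all formulas true to degree 1 under every valuation. -/
def Taut (t : ContTNorm) (T : TruthAlg t) : Set Formula :=
  {α | ∀ v : ℕ → ℝ, IsValuation t T v → eval t v α = 1}

/-- Principle P1. -/
def P1 (L : Set Formula) : Prop :=
  ∀ (t : ContTNorm) (T : TruthAlg t), Taut t T = L →
    ∀ α β : Formula,
      (Formula.iff α β ∈ L ↔
        ∀ v : ℕ → ℝ, IsValuation t T v → (eval t v α = 1 ↔ eval t v β = 1))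

/-- Principle P2. -/
def P2 (L : Set Formula) : Prop :=
  ∀ (t : ContTNorm) (T : TruthAlg t), Taut t T = L →
    ∀ v w : ℕ → ℝ, IsValuation t T v → IsValuation t T w → v ≠ w →
      ∃ α : Formula, 0 < eval t v α ∧ eval t w α = 0

/-- The Gödel t-norm: minimum. -/
def minT : ContTNorm where
  mul := fun x y => min x y
  maps_to := by
    rintro x ⟨hx0, hx1⟩ y ⟨hy0, hy1⟩
    exact ⟨le_min hx0 hy0, min_le_of_left_le hx1⟩
  continuousOn := (continuous_fst.min continuous_snd).continuousOn
  assoc := fun x _ y _ z _ => min_assoc x y z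
  comm := fun x _ y _ => min_comm x y
  mono := fun a _ b _ c _ h => min_le_min le_rfl h
  one_mul' := by rintro x ⟨hx0, hx1⟩; exact min_eq_right hx1

/-- The Łukasiewicz t-norm: `x ⊙ y = max 0 (x + y - 1)`. -/
def lukT : ContTNorm where
  mul := fun x y => max 0 (x + y - 1)
  maps_to := by
    rintro x ⟨hx0, hx1⟩ y ⟨hy0, hy1⟩
    exact ⟨le_max_left _ _, max_le zero_le_one (by linarith)⟩
  continuousOn :=
    (continuous_const.max ((continuous_fst.add continuous_snd).sub continuous_const)).continuousOn
  assoc := by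
    rintro x ⟨hx0, hx1⟩ y ⟨hy0, hy1⟩ z ⟨hz0, hz1⟩
    simp only [max_def]
    split_ifs <;> linarith
  comm := by intro x _ y _; rw [add_comm]
  mono := by
    rintro a _ b _ c _ h
    exact max_le_max le_rfl (by linarith)
  one_mul' := by
    rintro x ⟨hx0, hx1⟩
    rw [show (1:ℝ) + x - 1 = x by ring, max_eq_right hx0]

/-- The product t-norm: ordinary multiplication. -/
def prodT : ContTNorm where
  mul := fun x y => x * y
  maps_to := by
    rintro x ⟨hx0, hx1⟩ y ⟨hy0, hy1⟩
    exact ⟨mul_nonneg hx0 hy0, by nlinarith⟩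
  continuousOn := (continuous_fst.mul continuous_snd).continuousOn
  assoc := fun x _ y _ z _ => mul_assoc x y z
  comm := fun x _ y _ => mul_comm x y
  mono := by rintro a ⟨ha0, _⟩ b _ c _ h; exact mul_le_mul_of_nonneg_left h ha0
  one_mul' := fun x _ => one_mul x

lemma ContTNorm.mul_zero' (t : ContTNorm) {x : ℝ} (hx : x ∈ I01) : t.mul x 0 = 0 := by
  have h01 : (0:ℝ) ∈ I01 := ⟨le_rfl, zero_le_one⟩
  have h11 : (1:ℝ) ∈ I01 := ⟨zero_le_one, le_rfl⟩
  have h1 : t.mul x 0 = t.mul 0 x := t.comm x hx 0 h01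
  have h2 : t.mul 0 x ≤ t.mul 0 1 := t.mono 0 h01 x hx 1 h11 hx.2
  have h3 : t.mul 0 1 = t.mul 1 0 := t.comm 0 h01 1 h11
  have h4 : t.mul 1 0 = 0 := t.one_mul' 0 h01
  have h5 : t.mul x 0 ∈ I01 := t.maps_to x hx 0 h01
  rw [h3, h4] at h2
  rw [h1] at h5 ⊢
  exact le_antisymm h2 h5.1

lemma resid_mem_I01 (t : ContTNorm) {x y : ℝ} (hx : x ∈ I01) (hy : y ∈ I01) :
    resid t x y ∈ I01 := by
  have h01 : (0:ℝ) ∈ I01 := ⟨le_rfl, zero_le_one⟩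
  have h0 : (0:ℝ) ∈ {c | c ∈ I01 ∧ t.mul x c ≤ y} :=
    ⟨h01, by rw [t.mul_zero' hx]; exact hy.1⟩
  have hbdd : BddAbove {c | c ∈ I01 ∧ t.mul x c ≤ y} := ⟨1, fun c hc => hc.1.2⟩
  constructor
  · exact le_csSup hbdd h0
  · exact csSup_le ⟨0, h0⟩ fun c hc => hc.1.2

/-- The full algebra of truth values `[0,1]` for a t-norm `t`. -/
def fullAlg (t : ContTNorm) : TruthAlg t where
  carrier := I01
  subset := le_rfl
  zero_mem := ⟨le_rfl, zero_le_one⟩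
  one_mem := ⟨zero_le_one, le_rfl⟩
  mul_mem := t.maps_to
  resid_mem := fun _ hx _ hy => resid_mem_I01 t hx hy

lemma resid_eq_one_of_le (t : ContTNorm) {x y : ℝ} (hx : x ∈ I01) (hy : y ∈ I01)
    (hxy : x ≤ y) : resid t x y = 1 := by
  have h11 : (1:ℝ) ∈ I01 := ⟨zero_le_one, le_rfl⟩
  have hmul : t.mul x 1 = x := by rw [t.comm x hx 1 h11]; exact t.one_mul' x hx
  have h1 : (1:ℝ) ∈ {c | c ∈ I01 ∧ t.mul x c ≤ y} := ⟨h11, by rw [hmul]; exact hxy⟩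
  have hbdd : BddAbove {c | c ∈ I01 ∧ t.mul x c ≤ y} := ⟨1, fun c hc => hc.1.2⟩
  exact le_antisymm (csSup_le ⟨1, h1⟩ fun c hc => hc.1.2) (le_csSup hbdd h1)

lemma resid_one_zero (t : ContTNorm) : resid t 1 0 = 0 := by
  have : {c | c ∈ I01 ∧ t.mul 1 c ≤ 0} = {0} := by
    ext c
    constructor
    · rintro ⟨hc, hle⟩
      have := t.one_mul' c hc
      have := hc.1
      simp only [Set.mem_singleton_iff]
      linarith [this, (t.one_mul' c hc) ▸ hle]
    · rintro rfl
      exact ⟨⟨le_rfl, zero_le_one⟩, by rw [t.mul_zero' ⟨zero_le_one, le_rfl⟩]⟩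
  rw [resid, this, csSup_singleton]

/-- The two-element algebra of truth values `{0,1}`. -/
def boolAlg (t : ContTNorm) : TruthAlg t where
  carrier := {0, 1}
  subset := by
    rintro x (rfl | rfl)
    · exact ⟨le_rfl, zero_le_one⟩
    · exact ⟨zero_le_one, le_rfl⟩
  zero_mem := Or.inl rfl
  one_mem := Or.inr rfl
  mul_mem := by
    have h01 : (0:ℝ) ∈ I01 := ⟨le_rfl, zero_le_one⟩
    have h11 : (1:ℝ) ∈ I01 := ⟨zero_le_one, le_rfl⟩
    rintro x (rfl | rfl) y (rfl | rfl)
    · exact Or.inl (t.mul_zero' h01)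
    · exact Or.inl (by rw [t.comm 0 h01 1 h11]; exact t.mul_zero' h11)
    · exact Or.inl (t.mul_zero' h11)
    · exact Or.inr (t.one_mul' 1 h11)
  resid_mem := by
    have h01 : (0:ℝ) ∈ I01 := ⟨le_rfl, zero_le_one⟩
    have h11 : (1:ℝ) ∈ I01 := ⟨zero_le_one, le_rfl⟩
    rintro x (rfl | rfl) y (rfl | rfl)
    · exact Or.inr (resid_eq_one_of_le t h01 h01 le_rfl)
    · exact Or.inr (resid_eq_one_of_le t h01 h11 zero_le_one)
    · exact Or.inl (resid_one_zero t)
    · exact Or.inr (resid_eq_one_of_le t h11 h11 le_rfl)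

/-- Classical logic: the logic induced by the two-element algebra `{0,1}`
(this is independent of the chosen continuous t-norm). -/
def ClassicalLogic : Set Formula := Taut minT (boolAlg minT)

/-!
P1 applied to `X ↔ X & X` forces every truth value to be idempotent. On idempotents every
continuous t-norm acts as the Gödel t-norm (the minimum, with residuum `x → y = 1` for `x ≤ y`
and `= y` otherwise), and Gödel evaluation only sees which variables are positive. So an
idempotent value `0 < a < 1` violates P2: no formula separates the constant assignments `a`
and `1`. Hence P1 and P2 force the algebra to be `{0,1}`. Conversely, the classical tautology
`(¬¬X → X) & (X → X & X)` takes the value `1` only at `0` and `1`, so `{0,1}` is the only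
algebra inducing classical logic, and there P1 and P2 are checked directly.
-/

lemma zero_mem_I01 : (0 : ℝ) ∈ I01 := ⟨le_rfl, zero_le_one⟩

lemma one_mem_I01 : (1 : ℝ) ∈ I01 := ⟨zero_le_one, le_rfl⟩

namespace ContTNorm

variable (t : ContTNorm) {x y c : ℝ}

lemma mul_one' (hx : x ∈ I01) : t.mul x 1 = x := by
  rw [t.comm x hx 1 one_mem_I01, t.one_mul' x hx]

lemma mul_le_left (hx : x ∈ I01) (hy : y ∈ I01) : t.mul x y ≤ x :=
  (t.mono x hx y hy 1 one_mem_I01 hy.2).trans_eq (t.mul_one' hx)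

lemma mul_eq_one_iff (hx : x ∈ I01) (hy : y ∈ I01) : t.mul x y = 1 ↔ x = 1 ∧ y = 1 := by
  refine ⟨fun h => ⟨le_antisymm hx.2 (h ▸ t.mul_le_left hx hy), le_antisymm hy.2 ?_⟩, ?_⟩
  · rw [← h, t.comm x hx y hy]
    exact t.mul_le_left hy hx
  · rintro ⟨rfl, rfl⟩
    exact t.one_mul' 1 one_mem_I01

lemma continuousOn_mul_left (hx : x ∈ I01) : ContinuousOn (t.mul x) I01 :=
  t.continuousOn.comp (continuous_const.prodMk continuous_id).continuousOn
    fun _ hc => Set.mk_mem_prod hx hc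

def IsIdempotentElem (x : ℝ) : Prop := x ∈ I01 ∧ t.mul x x = x

lemma isIdempotentElem_zero : t.IsIdempotentElem 0 := ⟨zero_mem_I01, t.mul_zero' zero_mem_I01⟩

lemma isIdempotentElem_one : t.IsIdempotentElem 1 := ⟨one_mem_I01, t.one_mul' 1 one_mem_I01⟩

lemma isIdempotentElem_of_mem_pair (hx : x ∈ ({0, 1} : Set ℝ)) : t.IsIdempotentElem x := by
  rcases hx with rfl | rfl
  exacts [t.isIdempotentElem_zero, t.isIdempotentElem_one]

/-- By the intermediate value theorem `c = x * d` for some `d`, and then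
`x * c = (x * x) * d = x * d = c`. -/
lemma mul_eq_right_of_le (hx : t.IsIdempotentElem x) (hc : c ∈ I01) (hcx : c ≤ x) :
    t.mul x c = c := by
  obtain ⟨d, hd, rfl⟩ : c ∈ t.mul x '' Icc 0 1 := by
    apply intermediate_value_Icc zero_le_one (t.continuousOn_mul_left hx.1)
    rw [t.mul_zero' hx.1, t.mul_one' hx.1]
    exact ⟨hc.1, hcx⟩
  rw [← t.assoc x hx.1 x hx.1 d hd, hx.2]

lemma mul_eq_min (hx : t.IsIdempotentElem x) (hy : t.IsIdempotentElem y) :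
    t.mul x y = min x y := by
  rcases le_total x y with hxy | hyx
  · rw [min_eq_left hxy, t.comm x hx.1 y hy.1, t.mul_eq_right_of_le hy hx.1 hxy]
  · rw [min_eq_right hyx, t.mul_eq_right_of_le hx hy.1 hyx]

lemma isIdempotentElem_mul (hx : t.IsIdempotentElem x) (hy : t.IsIdempotentElem y) :
    t.IsIdempotentElem (t.mul x y) := by
  rw [t.mul_eq_min hx hy]
  rcases min_choice x y with h | h <;> rw [h] <;> assumption

end ContTNorm

lemma minT_isIdempotentElem {x : ℝ} (hx : x ∈ I01) : minT.IsIdempotentElem x :=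
  ⟨hx, min_self x⟩

section Residuum

variable (t : ContTNorm) {x y : ℝ}

/-- The supremum defining the residuum is attained, since by continuity the set is closed. -/
lemma mul_resid_le (hx : x ∈ I01) (hy : y ∈ I01) : t.mul x (resid t x y) ≤ y := by
  have hclosed : IsClosed {c | c ∈ I01 ∧ t.mul x c ≤ y} :=
    (t.continuousOn_mul_left hx).preimage_isClosed_of_isClosed isClosed_Icc isClosed_Iic
  refine (hclosed.csSup_mem ⟨0, zero_mem_I01, ?_⟩ ⟨1, fun c hc => hc.1.2⟩).2
  rw [t.mul_zero' hx]
  exact hy.1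

lemma resid_eq_one_iff (hx : x ∈ I01) (hy : y ∈ I01) : resid t x y = 1 ↔ x ≤ y := by
  refine ⟨fun h => ?_, resid_eq_one_of_le t hx hy⟩
  have := mul_resid_le t hx hy
  rwa [h, t.mul_one' hx] at this

lemma resid_of_isIdempotentElem (hx : t.IsIdempotentElem x) (hy : y ∈ I01) :
    resid t x y = if x ≤ y then 1 else y := by
  split_ifs with hxy
  · exact resid_eq_one_of_le t hx.1 hy hxy
  have hset : {c | c ∈ I01 ∧ t.mul x c ≤ y} = Icc 0 y := by
    ext c
    refine ⟨fun ⟨hc, hcy⟩ => ⟨hc.1, ?_⟩, fun hc => ?_⟩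
    · rcases le_total c x with hcx | hxc
      · rwa [t.mul_eq_right_of_le hx hc hcx] at hcy
      · exact absurd ((hx.2.symm.trans_le (t.mono x hx.1 x hx.1 c hc hxc)).trans hcy) hxy
    · have hcI : c ∈ I01 := ⟨hc.1, hc.2.trans hy.2⟩
      exact ⟨hcI, (t.mul_eq_right_of_le hx hcI (hc.2.trans (not_le.1 hxy).le)).trans_le hc.2⟩
  rw [resid, hset, csSup_Icc hy.1]

lemma isIdempotentElem_resid (hx : t.IsIdempotentElem x) (hy : t.IsIdempotentElem y) :
    t.IsIdempotentElem (resid t x y) := by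
  rw [resid_of_isIdempotentElem t hx hy.1]
  split_ifs
  exacts [t.isIdempotentElem_one, hy]

lemma zero_lt_resid_minT_iff (hx : x ∈ I01) (hy : y ∈ I01) :
    0 < resid minT x y ↔ (0 < x → 0 < y) := by
  rw [resid_of_isIdempotentElem minT (minT_isIdempotentElem hx) hy]
  split_ifs with hxy
  · exact iff_of_true one_pos fun hx0 => hx0.trans_le hxy
  · exact ⟨fun hy0 _ => hy0, fun h => h (hy.1.trans_lt (not_le.1 hxy))⟩

end Residuum

section Evaluation

variable {t : ContTNorm} {v : ℕ → ℝ}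

lemma eval_mem (T : TruthAlg t) (hv : IsValuation t T v) : ∀ α, eval t v α ∈ T.carrier
  | .var i => hv i
  | .bot => T.zero_mem
  | .conj α β => T.mul_mem _ (eval_mem T hv α) _ (eval_mem T hv β)
  | .impl α β => T.resid_mem _ (eval_mem T hv α) _ (eval_mem T hv β)

lemma eval_iff_eq_one {α β : Formula} (hα : eval t v α ∈ I01) (hβ : eval t v β ∈ I01) :
    eval t v (α.iff β) = 1 ↔ eval t v α = eval t v β := by
  change t.mul (resid t _ _) (resid t _ _) = 1 ↔ _
  rw [t.mul_eq_one_iff (resid_mem_I01 t hα hβ) (resid_mem_I01 t hβ hα),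
    resid_eq_one_iff t hα hβ, resid_eq_one_iff t hβ hα, le_antisymm_iff]

lemma isIdempotentElem_eval (hv : ∀ i, t.IsIdempotentElem (v i)) :
    ∀ α, t.IsIdempotentElem (eval t v α)
  | .var i => hv i
  | .bot => t.isIdempotentElem_zero
  | .conj α β =>
    t.isIdempotentElem_mul (isIdempotentElem_eval hv α) (isIdempotentElem_eval hv β)
  | .impl α β =>
    isIdempotentElem_resid t (isIdempotentElem_eval hv α) (isIdempotentElem_eval hv β)

lemma eval_eq_eval_minT (hv : ∀ i, t.IsIdempotentElem (v i)) :
    ∀ α, eval t v α = eval minT v α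
  | .var _ => rfl
  | .bot => rfl
  | .conj α β => by
    simp only [eval]
    rw [t.mul_eq_min (isIdempotentElem_eval hv α) (isIdempotentElem_eval hv β),
      eval_eq_eval_minT hv α, eval_eq_eval_minT hv β]
    rfl
  | .impl α β => by
    have hα := isIdempotentElem_eval hv α
    have hβ := isIdempotentElem_eval hv β
    simp only [eval]
    rw [resid_of_isIdempotentElem t hα hβ.1, ← eval_eq_eval_minT hv α,
      ← eval_eq_eval_minT hv β,
      resid_of_isIdempotentElem minT (minT_isIdempotentElem hα.1) hβ.1]

lemma zero_lt_eval_minT_iff {w : ℕ → ℝ} (hv : ∀ i, v i ∈ Ioc 0 1)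
    (hw : ∀ i, w i ∈ Ioc 0 1) :
    ∀ α, 0 < eval minT v α ↔ 0 < eval minT w α
  | .var i => iff_of_true (hv i).1 (hw i).1
  | .bot => Iff.rfl
  | .conj α β => by
    change 0 < min _ _ ↔ 0 < min _ _
    rw [lt_min_iff, lt_min_iff, zero_lt_eval_minT_iff hv hw α, zero_lt_eval_minT_iff hv hw β]
  | .impl α β => by
    have hvI : IsValuation minT (fullAlg minT) v := fun i => Ioc_subset_Icc_self (hv i)
    have hwI : IsValuation minT (fullAlg minT) w := fun i => Ioc_subset_Icc_self (hw i)
    simp only [eval]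
    rw [zero_lt_resid_minT_iff (eval_mem _ hvI α) (eval_mem _ hvI β),
      zero_lt_resid_minT_iff (eval_mem _ hwI α) (eval_mem _ hwI β),
      zero_lt_eval_minT_iff hv hw α, zero_lt_eval_minT_iff hv hw β]

end Evaluation

lemma TruthAlg.carrier_eq_pair {t : ContTNorm} (T : TruthAlg t) (h : T.carrier ⊆ {0, 1}) :
    T.carrier = {0, 1} :=
  h.antisymm (Set.insert_subset T.zero_mem (Set.singleton_subset_iff.2 T.one_mem))

lemma taut_eq_classicalLogic {t : ContTNorm} {T : TruthAlg t} (hT : T.carrier = {0, 1}) :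
    Taut t T = ClassicalLogic := by
  ext α
  refine forall_congr' fun v => ⟨fun h hv => ?_, fun h hv => ?_⟩
  · rw [← eval_eq_eval_minT fun i => t.isIdempotentElem_of_mem_pair (hv i)]
    exact h fun i => hT ▸ hv i
  · have hv' : ∀ i, v i ∈ ({0, 1} : Set ℝ) := fun i => hT ▸ hv i
    rw [eval_eq_eval_minT fun i => t.isIdempotentElem_of_mem_pair (hv' i)]
    exact h hv'

/-- `(¬¬X → X) & (X → X & X)`: the right conjunct forces an idempotent value `a`, and for
idempotent `a > 0` we get `¬a = 0`, so the left conjunct forces `a = 1`. -/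
def bivalence : Formula :=
  .conj (.impl (.impl (.impl (.var 0) .bot) .bot) (.var 0))
    (.impl (.var 0) (.conj (.var 0) (.var 0)))

lemma bivalence_mem_classicalLogic : bivalence ∈ ClassicalLogic := by
  intro v hv
  have r00 : resid minT 0 0 = 1 := resid_eq_one_of_le minT zero_mem_I01 zero_mem_I01 le_rfl
  have r11 : resid minT 1 1 = 1 := resid_eq_one_of_le minT one_mem_I01 one_mem_I01 le_rfl
  change min (resid minT (resid minT (resid minT (v 0) 0) 0) (v 0))
    (resid minT (v 0) (min (v 0) (v 0))) = 1
  obtain h | h : v 0 = 0 ∨ v 0 = 1 := hv 0 <;> simp only [h, min_self, r00, r11, resid_one_zero]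

lemma eq_zero_or_eq_one_of_eval_bivalence {t : ContTNorm} {v : ℕ → ℝ} (hv : v 0 ∈ I01)
    (h : eval t v bivalence = 1) : v 0 = 0 ∨ v 0 = 1 := by
  have hneg := resid_mem_I01 t hv zero_mem_I01
  have hnegneg := resid_mem_I01 t hneg zero_mem_I01
  have hsq := t.maps_to _ hv _ hv
  obtain ⟨hdn, hle⟩ :=
    (t.mul_eq_one_iff (resid_mem_I01 t hnegneg hv) (resid_mem_I01 t hv hsq)).1 h
  rw [resid_eq_one_iff t hnegneg hv] at hdn
  rw [resid_eq_one_iff t hv hsq] at hle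
  have hidem : t.IsIdempotentElem (v 0) := ⟨hv, le_antisymm (t.mul_le_left hv hv) hle⟩
  rcases hv.1.eq_or_lt with h0 | h0
  · exact Or.inl h0.symm
  · rw [resid_of_isIdempotentElem t hidem zero_mem_I01, if_neg h0.not_ge,
      resid_eq_one_of_le t zero_mem_I01 zero_mem_I01 le_rfl] at hdn
    exact Or.inr (le_antisymm hv.2 hdn)

lemma carrier_eq_pair_of_taut_eq_classicalLogic {t : ContTNorm} {T : TruthAlg t}
    (hT : Taut t T = ClassicalLogic) : T.carrier = {0, 1} := by
  have hbiv : bivalence ∈ Taut t T := hT ▸ bivalence_mem_classicalLogic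
  exact T.carrier_eq_pair fun a ha =>
    eq_zero_or_eq_one_of_eval_bivalence (v := fun _ => a) (T.subset ha) (hbiv _ fun _ => ha)

lemma P1_classicalLogic : P1 ClassicalLogic := by
  intro t T hT α β
  have hcar := carrier_eq_pair_of_taut_eq_classicalLogic hT
  rw [← hT]
  refine forall₂_congr fun v hv => ?_
  rw [eval_iff_eq_one (T.subset (eval_mem T hv α)) (T.subset (eval_mem T hv β))]
  obtain hα | hα : eval t v α = 0 ∨ eval t v α = 1 :=
    (hcar ▸ eval_mem T hv α : eval t v α ∈ ({0, 1} : Set ℝ))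
  <;> obtain hβ | hβ : eval t v β = 0 ∨ eval t v β = 1 :=
    (hcar ▸ eval_mem T hv β : eval t v β ∈ ({0, 1} : Set ℝ))
  <;> norm_num [hα, hβ]

lemma P2_classicalLogic : P2 ClassicalLogic := by
  intro t T hT v w hv hw hvw
  have hcar := carrier_eq_pair_of_taut_eq_classicalLogic hT
  obtain ⟨i, hi⟩ := Function.ne_iff.1 hvw
  obtain hvi | hvi : v i = 0 ∨ v i = 1 := (hcar ▸ hv i : v i ∈ ({0, 1} : Set ℝ))
  <;> obtain hwi | hwi : w i = 0 ∨ w i = 1 := (hcar ▸ hw i : w i ∈ ({0, 1} : Set ℝ))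
  · exact absurd (hvi.trans hwi.symm) hi
  · refine ⟨.impl (.var i) .bot, ?_, ?_⟩
    · change 0 < resid t (v i) 0
      rw [hvi, resid_eq_one_of_le t zero_mem_I01 zero_mem_I01 le_rfl]
      exact one_pos
    · change resid t (w i) 0 = 0
      rw [hwi, resid_one_zero]
  · exact ⟨.var i, show 0 < v i from hvi ▸ one_pos, hwi⟩
  · exact absurd (hvi.trans hwi.symm) hi

section Principles

variable {L : Set Formula} {t : ContTNorm} {T : TruthAlg t}

lemma isIdempotentElem_of_P1 (hP1 : P1 L) (hT : Taut t T = L) {a : ℝ} (ha : a ∈ T.carrier) :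
    t.IsIdempotentElem a := by
  let X : Formula := .var 0
  have hX : X.iff (X.conj X) ∈ Taut t T := by
    rw [hT, hP1 t T hT]
    intro v hv
    exact ((t.mul_eq_one_iff (T.subset (hv 0)) (T.subset (hv 0))).trans and_self_iff).symm
  have hI := T.subset ha
  have h := hX (fun _ => a) fun _ => ha
  exact ⟨hI, ((eval_iff_eq_one (v := fun _ => a) (α := X) (β := X.conj X) hI
    (t.maps_to a hI a hI)).1 h).symm⟩

lemma eq_zero_or_eq_one_of_P2 (hP2 : P2 L) (hT : Taut t T = L) {a : ℝ} (haT : a ∈ T.carrier)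
    (ha : t.IsIdempotentElem a) : a = 0 ∨ a = 1 := by
  by_contra! h
  have hpos : a ∈ Ioc 0 1 := ⟨ha.1.1.lt_of_ne (Ne.symm h.1), ha.1.2⟩
  obtain ⟨α, hα, hα'⟩ := hP2 t T hT (fun _ => a) (fun _ => 1) (fun _ => haT)
    (fun _ => T.one_mem) fun heq => h.2 (congrFun heq 0)
  rw [eval_eq_eval_minT fun _ => ha] at hα
  rw [eval_eq_eval_minT fun _ => t.isIdempotentElem_one] at hα'
  have hpattern := zero_lt_eval_minT_iff (fun _ => hpos) (fun _ => ⟨one_pos, le_rfl⟩) α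
  exact hα'.not_gt (hpattern.1 hα)

lemma carrier_eq_pair_of_P1_of_P2 (hP1 : P1 L) (hP2 : P2 L) (hT : Taut t T = L) :
    T.carrier = {0, 1} :=
  T.carrier_eq_pair fun _ ha => eq_zero_or_eq_one_of_P2 hP2 hT ha (isIdempotentElem_of_P1 hP1 hT ha)

end Principles

/-- A real-valued logic satisfies both P1 and P2 iff it is classical logic, iff the
two-element algebra is the unique algebra of truth values inducing it. -/
theorem P1_and_P2_iff_classical (L : Set Formula)
    (hL : ∃ (t : ContTNorm) (T : TruthAlg t), Taut t T = L) :
    ((P1 L ∧ P2 L) ↔ L = ClassicalLogic) ∧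
    (L = ClassicalLogic ↔
      ∀ (t' : ContTNorm) (T' : TruthAlg t'), Taut t' T' = L → T'.carrier = {0, 1}) := by
  obtain ⟨t, T, hT⟩ := hL
  refine ⟨⟨fun ⟨hP1, hP2⟩ => ?_, ?_⟩, ⟨?_, fun h => ?_⟩⟩
  · rw [← hT]
    exact taut_eq_classicalLogic (carrier_eq_pair_of_P1_of_P2 hP1 hP2 hT)
  · rintro rfl
    exact ⟨P1_classicalLogic, P2_classicalLogic⟩
  · rintro rfl t' T' hT'
    exact carrier_eq_pair_of_taut_eq_classicalLogic hT'
  · rw [← hT]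
    exact taut_eq_classicalLogic (h t T hT)

end
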